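/- For probabilities λ1 ≥ λ2 ≥ λ3 ≥ 0 with λ1+λ2+λ3 = 1 and fixed purity λ1²+λ2²+λ3² = γ, the Shannon entropy H(λ) = -∑ λi log λi is maximized when λ2 = λ3, i.e., at λ1 = 1/3 + √((2/3)(γ - 1/3)) and λ2 = λ3 = (1-λ1)/2. -/

import Mathlib

/-!
Sorted vectors with sum `1` and purity `γ` are parametrized by their largest component `x`: the
other two are the roots `mid γ x ≥ low γ x` of a quadratic. Along this arc
`(x, mid, low)' = (mid - low, low - x, x - mid) / (mid - low)`, so the derivative of the entropy is
`-((mid - low) log x + (low - x) log mid + (x - mid) log low) / (mid - low)`, which is nonnegative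
by concavity of `log`. Hence the entropy increases with `x` up to the largest admissible value
`1/3 + √((2/3)(γ - 1/3))`, where `mid = low`.
-/

open Real Set

lemma cyclic_sub_mul_log_nonpos {a b c : ℝ} (hc : 0 < c) (hcb : c ≤ b) (hba : b ≤ a) :
    (b - c) * log a + (c - a) * log b + (a - b) * log c ≤ 0 := by
  have hb : 0 < b := hc.trans_le hcb
  have ha : 0 < a := hb.trans_le hba
  have hab := log_le_sub_one_of_pos (div_pos ha hb)
  have hcb' := log_le_sub_one_of_pos (div_pos hc hb)
  rw [log_div ha.ne' hb.ne'] at hab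
  rw [log_div hc.ne' hb.ne'] at hcb'
  calc (b - c) * log a + (c - a) * log b + (a - b) * log c
      = (b - c) * (log a - log b) + (a - b) * (log c - log b) := by ring
    _ ≤ (b - c) * (a / b - 1) + (a - b) * (c / b - 1) :=
        add_le_add (mul_le_mul_of_nonneg_left hab (sub_nonneg.2 hcb))
          (mul_le_mul_of_nonneg_left hcb' (sub_nonneg.2 hba))
    _ = 0 := by field_simp; ring

namespace FixedPurity

variable (γ : ℝ)

noncomputable def maxLargest : ℝ := 1 / 3 + √((2 / 3) * (γ - 1 / 3))

def disc (x : ℝ) : ℝ := 2 * γ - 1 + 2 * x - 3 * x ^ 2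

/-- `mid γ x ≥ low γ x` are the roots of `t ^ 2 - (1 - x) t + (2 x ^ 2 - 2 x + 1 - γ) / 2`,
i.e. the two remaining components of a vector with sum `1`, purity `γ` and a component `x`. -/
noncomputable def mid (x : ℝ) : ℝ := (1 - x + √(disc γ x)) / 2

noncomputable def low (x : ℝ) : ℝ := (1 - x - √(disc γ x)) / 2

noncomputable def entropy (x : ℝ) : ℝ :=
  negMulLog x + negMulLog (mid γ x) + negMulLog (low γ x)

variable {γ}

lemma mid_sub_low (x : ℝ) : mid γ x - low γ x = √(disc γ x) := by
  unfold mid low; ring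

lemma disc_eq_sq_sub {a b c : ℝ} (hsum : a + b + c = 1) (hpur : a ^ 2 + b ^ 2 + c ^ 2 = γ) :
    disc γ a = (b - c) ^ 2 := by
  unfold disc; linear_combination (b + c + 1 - a) * hsum - 2 * hpur

lemma le_maxLargest {a b c : ℝ} (hsum : a + b + c = 1)
    (hpur : a ^ 2 + b ^ 2 + c ^ 2 = γ) : a ≤ maxLargest γ := by
  have hD := disc_eq_sq_sub hsum hpur
  unfold disc at hD
  unfold maxLargest
  have hsq : (a - 1 / 3) ^ 2 ≤ (2 / 3) * (γ - 1 / 3) := by nlinarith [sq_nonneg (b - c)]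
  linarith [le_abs_self (a - 1 / 3), abs_le_sqrt hsq]

lemma entropy_eq_of_sum_eq_one {a b c : ℝ} (hcb : c ≤ b) (hsum : a + b + c = 1)
    (hpur : a ^ 2 + b ^ 2 + c ^ 2 = γ) :
    entropy γ a = negMulLog a + negMulLog b + negMulLog c := by
  have hsqrt : √(disc γ a) = b - c := by
    rw [disc_eq_sq_sub hsum hpur, sqrt_sq (sub_nonneg.2 hcb)]
  have hmid : mid γ a = b := by unfold mid; rw [hsqrt]; linarith
  have hlow : low γ a = c := by unfold low; rw [hsqrt]; linarith
  rw [entropy, hmid, hlow]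

lemma entropy_maxLargest :
    entropy γ (maxLargest γ) =
      negMulLog (maxLargest γ) + 2 * negMulLog ((1 - maxLargest γ) / 2) := by
  have hD : √(disc γ (maxLargest γ)) = 0 := by
    rw [sqrt_eq_zero']
    unfold disc maxLargest
    nlinarith [sq_sqrt' (x := (2 / 3) * (γ - 1 / 3)), le_max_left ((2 / 3) * (γ - 1 / 3)) 0]
  rw [entropy, mid, low, hD, add_zero, sub_zero]
  ring

lemma continuous_entropy : Continuous (entropy γ) := by
  unfold entropy mid low disc
  fun_prop

lemma hasDerivAt_sqrt_disc {x : ℝ} (hx : 0 < disc γ x) :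
    HasDerivAt (fun y => √(disc γ y)) ((1 - 3 * x) / √(disc γ x)) x := by
  have h : HasDerivAt (disc γ) (2 - 6 * x) x := by
    have := (((hasDerivAt_id' x).const_mul 2).const_add (2 * γ - 1)).sub
      ((hasDerivAt_pow 2 x).const_mul 3)
    exact this.congr_deriv (by ring)
  refine (h.sqrt hx.ne').congr_deriv ?_
  field_simp; ring

lemma hasDerivAt_mid {x : ℝ} (hx : 0 < disc γ x) :
    HasDerivAt (mid γ) ((low γ x - x) / (mid γ x - low γ x)) x := by
  have h := (((hasDerivAt_id' x).const_sub 1).add (hasDerivAt_sqrt_disc hx)).div_const 2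
  refine h.congr_deriv ?_
  rw [mid_sub_low]; unfold low; field_simp; ring

lemma hasDerivAt_low {x : ℝ} (hx : 0 < disc γ x) :
    HasDerivAt (low γ) ((x - mid γ x) / (mid γ x - low γ x)) x := by
  have h := (((hasDerivAt_id' x).const_sub 1).sub (hasDerivAt_sqrt_disc hx)).div_const 2
  refine h.congr_deriv ?_
  rw [mid_sub_low]; unfold mid; field_simp; ring

lemma hasDerivAt_entropy {x : ℝ} (hx : 0 < x) (hD : 0 < disc γ x) (hlow : 0 < low γ x) :
    HasDerivAt (entropy γ)
      (-((mid γ x - low γ x) * log x + (low γ x - x) * log (mid γ x)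
        + (x - mid γ x) * log (low γ x)) / (mid γ x - low γ x)) x := by
  have hd : 0 < mid γ x - low γ x := by rw [mid_sub_low]; exact sqrt_pos.2 hD
  have hmid : 0 < mid γ x := by linarith
  have h := ((hasDerivAt_negMulLog hx.ne').add
    ((hasDerivAt_negMulLog hmid.ne').comp x (hasDerivAt_mid hD))).add
    ((hasDerivAt_negMulLog hlow.ne').comp x (hasDerivAt_low hD))
  refine h.congr_deriv ?_
  field_simp
  ring

-- `2 x ^ 2 - 2 x + 1 - γ = 2 mid low` and `6 x ^ 2 - 4 x + 1 - γ = 2 (x - mid) (x - low)`; at the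
-- largest component `x = a` of a vector `(a, b, c)` these are `2 b c` and `2 (a - b) (a - c)`.
lemma mid_lt_self_of_lt {a x : ℝ} (ha : 1 / 3 ≤ a) (hr : 0 ≤ 6 * a ^ 2 - 4 * a + 1 - γ)
    (hax : a < x) : mid γ x < x := by
  have : √(disc γ x) < 3 * x - 1 := by
    rw [sqrt_lt' (by linarith)]
    unfold disc
    nlinarith [mul_pos (sub_pos.2 hax) (show (0 : ℝ) < 3 * x + 3 * a - 2 by linarith)]
  unfold mid; linarith

lemma low_pos_of_lt {a x : ℝ} (ha : 1 / 3 ≤ a) (hq : 0 ≤ 2 * a ^ 2 - 2 * a + 1 - γ)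
    (hr : 0 ≤ 6 * a ^ 2 - 4 * a + 1 - γ) (hax : a < x) (hx1 : x < 1) : 0 < low γ x := by
  have : √(disc γ x) < 1 - x := by
    rw [sqrt_lt' (by linarith)]
    unfold disc
    rcases lt_or_ge γ (1 / 2) with hγ | hγ
    · nlinarith [sq_nonneg (x - 1 / 2)]
    · have ha2 : 1 / 2 ≤ a := by
        by_contra! h
        nlinarith [mul_pos (show (0 : ℝ) < 1 / 2 - a by linarith)
          (show (0 : ℝ) < a - 1 / 6 by linarith)]
      nlinarith [mul_pos (sub_pos.2 hax) (show (0 : ℝ) < x + a - 1 by linarith)]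
  unfold low; linarith

lemma disc_pos_low_pos_mid_le_of_mem_Ioo {a b c x : ℝ} (hc : 0 ≤ c) (hcb : c ≤ b)
    (hba : b ≤ a) (hsum : a + b + c = 1) (hpur : a ^ 2 + b ^ 2 + c ^ 2 = γ)
    (hx : x ∈ Ioo a (maxLargest γ)) :
    0 < disc γ x ∧ 0 < low γ x ∧ mid γ x ≤ x := by
  obtain ⟨hax, hxs⟩ := hx
  have hγ : 1 / 3 ≤ γ := by nlinarith [sq_nonneg (a - b), sq_nonneg (b - c), sq_nonneg (a - c)]
  have hγ1 : γ ≤ 1 := by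
    nlinarith [mul_nonneg (hc.trans hcb) hc, mul_nonneg (hc.trans (hcb.trans hba)) hc,
      mul_nonneg (hc.trans (hcb.trans hba)) (hc.trans hcb)]
  unfold maxLargest at hxs
  set s := √((2 / 3) * (γ - 1 / 3))
  have hs2 : s ^ 2 = (2 / 3) * (γ - 1 / 3) := sq_sqrt (by linarith)
  have hs0 : 0 ≤ s := sqrt_nonneg _
  have ha : 1 / 3 ≤ a := by linarith
  have hD : 0 < disc γ x := by
    unfold disc
    nlinarith [mul_pos (sub_pos.2 hxs) (show 0 < s + (x - 1 / 3) by linarith)]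
  have hq : 0 ≤ 2 * a ^ 2 - 2 * a + 1 - γ := by
    nlinarith [mul_nonneg (hc.trans hcb) hc]
  have hr : 0 ≤ 6 * a ^ 2 - 4 * a + 1 - γ := by
    nlinarith [mul_nonneg (sub_nonneg.2 hba) (sub_nonneg.2 (hcb.trans hba))]
  exact ⟨hD, low_pos_of_lt ha hq hr hax (by nlinarith),
    (mid_lt_self_of_lt ha hr hax).le⟩

lemma entropy_monotoneOn {a b c : ℝ} (hc : 0 ≤ c) (hcb : c ≤ b) (hba : b ≤ a)
    (hsum : a + b + c = 1) (hpur : a ^ 2 + b ^ 2 + c ^ 2 = γ) :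
    MonotoneOn (entropy γ) (Icc a (maxLargest γ)) := by
  have hderiv : ∀ x ∈ interior (Icc a (maxLargest γ)),
      ∃ d, HasDerivAt (entropy γ) d x ∧ 0 ≤ d := by
    intro x hx
    rw [interior_Icc] at hx
    obtain ⟨hD, hlow, hmid⟩ := disc_pos_low_pos_mid_le_of_mem_Ioo hc hcb hba hsum hpur hx
    have hd : 0 < mid γ x - low γ x := by rw [mid_sub_low]; exact sqrt_pos.2 hD
    exact ⟨_, hasDerivAt_entropy (by linarith) hD hlow,
      div_nonneg (neg_nonneg.2 (cyclic_sub_mul_log_nonpos hlow (sub_nonneg.1 hd.le) hmid)) hd.le⟩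
  refine monotoneOn_of_deriv_nonneg (convex_Icc _ _) continuous_entropy.continuousOn
    (fun x hx => ?_) (fun x hx => ?_)
  · obtain ⟨d, hd, -⟩ := hderiv x hx
    exact hd.differentiableAt.differentiableWithinAt
  · obtain ⟨d, hd, hd0⟩ := hderiv x hx
    rwa [hd.deriv]

end FixedPurity

lemma negMulLog_div_log_two (x : ℝ) : negMulLog x / log 2 = -(x * logb 2 x) := by
  rw [negMulLog, logb]; ring

theorem stmt0 (γ : ℝ) (lam : Fin 3 → ℝ)
    (h10 : lam 1 ≤ lam 0) (h21 : lam 2 ≤ lam 1) (hpos : 0 ≤ lam 2)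
    (hsum : ∑ i, lam i = 1) (hpur : ∑ i, lam i ^ 2 = γ) :
    let l1 : ℝ := 1/3 + Real.sqrt ((2/3) * (γ - 1/3))
    (-∑ i, lam i * Real.logb 2 (lam i)) ≤
      -(l1 * Real.logb 2 l1) - 2 * ((1 - l1)/2 * Real.logb 2 ((1 - l1)/2)) := by
  dsimp only
  rw [Fin.sum_univ_three] at hsum hpur ⊢
  have htop := FixedPurity.le_maxLargest hsum hpur
  have hmono := FixedPurity.entropy_monotoneOn hpos h21 h10 hsum hpur
  have hle := div_le_div_of_nonneg_right (hmono ⟨le_rfl, htop⟩ ⟨htop, le_rfl⟩ htop)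
    (log_pos one_lt_two).le
  rw [FixedPurity.entropy_eq_of_sum_eq_one h21 hsum hpur, FixedPurity.entropy_maxLargest] at hle
  simp only [add_div, mul_div_assoc, negMulLog_div_log_two, FixedPurity.maxLargest] at hle
  linarith
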